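/- Under the stated bilevel setting with constraints, assumptions (A1)–(A3), and the stated approximation scheme with μ_k → 0 and θ_k → 0, suppose that along a subsequence of indices ℓ ⊆ ℕ one has x_ℓ ∈ argmin_{x ∈ X} φ_ℓ(x), and that x_ℓ converges to x̃. Then x̃ ∈ argmin_{x ∈ X} φ(x), and lim_{ℓ→∞} ( inf_{x ∈ X} φ_ℓ(x) ) = inf_{x ∈ X} φ(x). -/

import Mathlib

open Filter Topology

noncomputable section

/-- `ℝ^m` as a Euclidean space. -/
abbrev Evec (m : ℕ) := EuclideanSpace ℝ (Fin m)

/-- The lower-level value function `f*(x) = inf { f(x,y) : h(x,y) ≤ 0 }`,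
taken in the extended reals (so `inf ∅ = +∞`). -/
def lowerValue {m n : ℕ} (f h : Evec m → Evec n → ℝ) (x : Evec m) : EReal :=
  ⨅ y ∈ {y : Evec n | h x y ≤ 0}, ((f x y : ℝ) : EReal)

/-- The lower-level solution set `S(x) = argmin { f(x,y) : h(x,y) ≤ 0 }`. -/
def lowerArgmin {m n : ℕ} (f h : Evec m → Evec n → ℝ) (x : Evec m) : Set (Evec n) :=
  {y | h x y ≤ 0 ∧ ∀ y', h x y' ≤ 0 → f x y ≤ f x y'}

/-- The upper-level value function
`φ(x) = inf { F(x,y) : H(x,y) ≤ 0, h(x,y) ≤ 0, f(x,y) ≤ f*(x) }`,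
taken in the extended reals (so `inf ∅ = +∞`). -/
def upperValue {m n : ℕ} (F f H h : Evec m → Evec n → ℝ) (x : Evec m) : EReal :=
  ⨅ y ∈ {y : Evec n |
      H x y ≤ 0 ∧ h x y ≤ 0 ∧ ((f x y : ℝ) : EReal) ≤ lowerValue f h x},
    ((F x y : ℝ) : EReal)

/-- Canonical monotone extension of a nondecreasing function `P : ℝ → [0,+∞]`
to extended-real arguments (agrees with `P` on `ℝ` when `P` is nondecreasing and
continuous). -/
def erealExt (P : ℝ → EReal) : EReal → EReal := fun e =>
  haveI := Classical.dec (e = ⊥)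
  if e = ⊥ then ⨅ r : ℝ, P r else sSup (P '' {r : ℝ | (r : EReal) ≤ e})

/-- The regularized barrier value function
`f_k*(x) = inf_y ( f(x,y) + P_{B,k}(h(x,y)) + (μ_k/2)‖y‖² )`. -/
def fkstar {m n : ℕ} (f h : Evec m → Evec n → ℝ) (PB : ℕ → ℝ → EReal)
    (μ : ℕ → ℝ) (k : ℕ) (x : Evec m) : EReal :=
  ⨅ y : Evec n, (((f x y + μ k / 2 * ‖y‖ ^ 2 : ℝ) : EReal) + PB k (h x y))

/-- The approximate upper-level value function
`φ_k(x) = inf_y ( F(x,y) + P_{H,k}(H(x,y)) + P_{h,k}(h(x,y))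
  + P_{f,k}( f(x,y) − f_k*(x) ) + (θ_k/2)‖y‖² )`. -/
def phik {m n : ℕ} (F f H h : Evec m → Evec n → ℝ)
    (PB PH Ph Pf : ℕ → ℝ → EReal) (μ θ : ℕ → ℝ) (k : ℕ) (x : Evec m) : EReal :=
  ⨅ y : Evec n,
    (((F x y + θ k / 2 * ‖y‖ ^ 2 : ℝ) : EReal) + PH k (H x y) + Ph k (h x y)
      + erealExt (Pf k) (((f x y : ℝ) : EReal) - fkstar f h PB μ k x))

/-- The indicator function `δ_X` of a set `X`. -/
def deltaInd {m : ℕ} (X : Set (Evec m)) (x : Evec m) : EReal :=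
  haveI := Classical.dec (x ∈ X)
  if x ∈ X then 0 else ⊤

/-- A family of auxiliary (penalty or modified barrier) functions `ℝ → [0,+∞]`:
each is nonnegative, nondecreasing and continuous; `P_k(ω) → 0` for every `ω ≤ 0`;
and whenever `limsup_k P_k(ω_k) < +∞` for a real sequence `(ω_k)` one has
`limsup_k ω_k ≤ 0`. -/
def AuxFamily (P : ℕ → ℝ → EReal) : Prop :=
  (∀ k ω, 0 ≤ P k ω) ∧ (∀ k, Monotone (P k)) ∧ (∀ k, Continuous (P k)) ∧
    (∀ ω : ℝ, ω ≤ 0 → Tendsto (fun k => P k ω) atTop (𝓝 0)) ∧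
    (∀ ω : ℕ → ℝ, limsup (fun k => P k (ω k)) atTop < ⊤ →
      limsup (fun k => ((ω k : ℝ) : EReal)) atTop ≤ 0)

/-- A family of barrier functions `ℝ → [0,+∞]`: each is nonnegative and
nondecreasing, equal to `+∞` on `[0,∞)`, with `P_{B,k}(ω) → 0` for every `ω < 0`. -/
def BarrierFamily (PB : ℕ → ℝ → EReal) : Prop :=
  (∀ k ω, 0 ≤ PB k ω) ∧ (∀ k, Monotone (PB k)) ∧
    (∀ k, ∀ ω : ℝ, 0 ≤ ω → PB k ω = ⊤) ∧
    (∀ ω : ℝ, ω < 0 → Tendsto (fun k => PB k ω) atTop (𝓝 0))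

/-- `g` is level-bounded in `y` locally uniformly in `x ∈ X`. -/
def LevelBoundedUnif {m n : ℕ} (g : Evec m → Evec n → ℝ) (X : Set (Evec m)) : Prop :=
  ∀ x₀ ∈ X, ∀ c : ℝ, ∃ δ > (0 : ℝ), ∃ B : Set (Evec n), Bornology.IsBounded B ∧
    ∀ x ∈ X, ‖x - x₀‖ ≤ δ → {y | g x y ≤ c} ⊆ B

end

namespace BVFSM

lemma limsup_subseq_le {u : ℕ → EReal} {k : ℕ → ℕ} (hk : StrictMono k) :
    limsup (fun i => u (k i)) atTop ≤ limsup u atTop := by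
  rw [show (fun i => u (k i)) = u ∘ k from rfl, Filter.limsup_comp]
  exact limsup_le_limsup_of_le hk.tendsto_atTop

lemma ereal_le_coe_of_forall {a : EReal} {b : ℝ}
    (h : ∀ ε : ℝ, 0 < ε → a ≤ ((b + ε : ℝ) : EReal)) : a ≤ (b : EReal) := by
  by_contra hc
  push_neg at hc
  obtain ⟨z, hz1, hz2⟩ := EReal.exists_between_coe_real hc
  have hz1' : b < z := EReal.coe_lt_coe_iff.mp hz1
  have := h (z - b) (by linarith)
  rw [show b + (z - b) = z by ring] at this
  exact absurd (lt_of_le_of_lt this hz2) (lt_irrefl _)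

lemma exists_coe_le_of_ne_bot {e : EReal} (he : e ≠ ⊥) : ∃ r : ℝ, (r : EReal) ≤ e := by
  induction e with
  | bot => exact absurd rfl he
  | coe r => exact ⟨r, le_rfl⟩
  | top => exact ⟨0, le_top⟩

lemma erealExt_nonneg {P : ℝ → EReal} (hP : ∀ r, 0 ≤ P r) (e : EReal) :
    0 ≤ erealExt P e := by
  unfold erealExt
  split
  · exact le_iInf hP
  · next he =>
    obtain ⟨r, hr⟩ := exists_coe_le_of_ne_bot he
    exact le_trans (hP r) (le_sSup ⟨r, hr, rfl⟩)

lemma erealExt_le {P : ℝ → EReal} (hmono : Monotone P) {e : EReal} {r : ℝ}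
    (he : e ≤ (r : EReal)) : erealExt P e ≤ P r := by
  unfold erealExt
  split
  · exact iInf_le _ r
  · apply sSup_le
    rintro _ ⟨s, hs, rfl⟩
    exact hmono (EReal.coe_le_coe_iff.mp (le_trans hs he))

lemma erealExt_lower (P : ℝ → EReal) {e : EReal} {r : ℝ} (hre : (r : EReal) ≤ e) :
    P r ≤ erealExt P e := by
  unfold erealExt
  split
  · next he => rw [he] at hre; exact absurd hre (by simp)
  · exact le_sSup ⟨r, hre, rfl⟩

lemma piece_bound {a b : EReal} {M c : ℝ} (ha : ((-M : ℝ) : EReal) ≤ a)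
    (h : a + b ≤ (c : EReal)) : b ≤ ((c + M : ℝ) : EReal) := by
  have h1 : ((-M : ℝ) : EReal) + b ≤ (c : EReal) := le_trans (add_le_add ha le_rfl) h
  have h2 : (M : EReal) + (((-M : ℝ) : EReal) + b) ≤ (M : EReal) + (c : EReal) :=
    add_le_add_right h1 _
  have h3 : (M : EReal) + (((-M : ℝ) : EReal) + b) = b := by
    rw [← add_assoc, ← EReal.coe_add]
    norm_num
  rw [h3] at h2
  rw [show ((c + M : ℝ) : EReal) = (M : EReal) + (c : EReal) by rw [← EReal.coe_add]; ring_nf]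
  exact h2

lemma coe_sub_nonpos {r : ℝ} {b : EReal} (h : (r : EReal) ≤ b) : (r : EReal) - b ≤ 0 := by
  induction b with
  | bot => exact absurd h (by simp)
  | coe s =>
    rw [← EReal.coe_sub, EReal.coe_nonpos]
    have := EReal.coe_le_coe_iff.mp h
    linarith
  | top =>
    rw [show (r : EReal) - ⊤ = ⊥ by rfl]
    exact bot_le

set_option maxHeartbeats 1000000 in
/-- The key subsequence property of an auxiliary family. -/
lemma aux_sub {P : ℕ → ℝ → EReal} (hP : AuxFamily P) {k : ℕ → ℕ} (hk : StrictMono k)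
    (ω : ℕ → ℝ) (C : ℝ) (hbd : ∀ᶠ i in atTop, P (k i) (ω i) ≤ (C : EReal)) :
    limsup (fun i => ((ω i : ℝ) : EReal)) atTop ≤ 0 := by
  classical
  set Ω : ℕ → ℝ := fun j => if hj : ∃ i, k i = j then ω hj.choose else -1 with hΩ
  have hΩk : ∀ i, Ω (k i) = ω i := by
    intro i
    have hj : ∃ i', k i' = k i := ⟨i, rfl⟩
    have : hj.choose = i := hk.injective hj.choose_spec
    simp only [hΩ, dif_pos hj, this]
  obtain ⟨i₀, hi₀⟩ := eventually_atTop.mp hbd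
  have hoff : ∀ᶠ j in atTop, P j (-1) ≤ (1 : EReal) := by
    have h01 : (0 : EReal) < 1 := by norm_num
    have h2 := (hP.2.2.2.1 (-1) (by norm_num)).eventually_lt_const h01
    exact h2.mono fun j hj => le_of_lt hj
  have hbig : ∀ᶠ j in atTop, P j (Ω j) ≤ ((max C 1 : ℝ) : EReal) := by
    obtain ⟨j₁, hj₁⟩ := eventually_atTop.mp hoff
    rw [eventually_atTop]
    refine ⟨max (k i₀) j₁, fun j hj => ?_⟩
    by_cases hjex : ∃ i, k i = j
    · have hchoose := hjex.choose_spec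
      have hige : i₀ ≤ hjex.choose := by
        have : k i₀ ≤ k hjex.choose := by
          rw [hchoose]; exact le_trans (le_max_left _ _) hj
        exact hk.le_iff_le.mp this
      have := hi₀ hjex.choose hige
      rw [hchoose] at this
      simp only [hΩ, dif_pos hjex]
      exact le_trans this (EReal.coe_le_coe_iff.mpr (le_max_left C 1))
    · simp only [hΩ, dif_neg hjex]
      refine le_trans (hj₁ j (le_trans (le_max_right _ _) hj)) ?_
      exact_mod_cast EReal.coe_le_coe_iff.mpr (le_max_right C 1)
  have hlimsup : limsup (fun j => P j (Ω j)) atTop < ⊤ :=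
    lt_of_le_of_lt (limsup_le_of_le (by isBoundedDefault) hbig) (EReal.coe_lt_top _)
  have hΩ0 : limsup (fun j => ((Ω j : ℝ) : EReal)) atTop ≤ 0 := hP.2.2.2.2 Ω hlimsup
  calc limsup (fun i => ((ω i : ℝ) : EReal)) atTop
      = limsup (fun i => ((Ω (k i) : ℝ) : EReal)) atTop := by
        congr 1; funext i; rw [hΩk]
    _ ≤ limsup (fun j => ((Ω j : ℝ) : EReal)) atTop := limsup_subseq_le (u := fun j => ((Ω j : ℝ) : EReal)) hk
    _ ≤ 0 := hΩ0

/-- `f_k*` is bounded below by a lower bound of `f`. -/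
lemma fkstar_ge_cf {m n : ℕ} {f h : Evec m → Evec n → ℝ} {PB : ℕ → ℝ → EReal}
    {μ : ℕ → ℝ} {cf : ℝ} (hfbd : ∀ x y, cf ≤ f x y) (hPB0 : ∀ k ω, 0 ≤ PB k ω)
    (hμ : ∀ k, 0 < μ k) (k : ℕ) (x : Evec m) :
    (cf : EReal) ≤ fkstar f h PB μ k x := by
  refine le_iInf fun y => ?_
  have h1 : (cf : EReal) ≤ ((f x y + μ k / 2 * ‖y‖ ^ 2 : ℝ) : EReal) := by
    rw [EReal.coe_le_coe_iff]
    have : 0 ≤ μ k / 2 * ‖y‖ ^ 2 :=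
      mul_nonneg (by linarith [hμ k]) (pow_nonneg (norm_nonneg y) 2)
    linarith [hfbd x y]
  exact le_trans h1 (le_add_of_nonneg_right (hPB0 k _))

/-- `f_k* ≥ f*`. -/
lemma fkstar_ge_lowerValue {m n : ℕ} {f h : Evec m → Evec n → ℝ} {PB : ℕ → ℝ → EReal}
    {μ : ℕ → ℝ} (hPB0 : ∀ k ω, 0 ≤ PB k ω) (hPBtop : ∀ k, ∀ ω : ℝ, 0 ≤ ω → PB k ω = ⊤)
    (hμ : ∀ k, 0 < μ k) (k : ℕ) (x : Evec m) :
    lowerValue f h x ≤ fkstar f h PB μ k x := by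
  refine le_iInf fun y => ?_
  by_cases hy : h x y ≤ 0
  · have h1 : lowerValue f h x ≤ ((f x y : ℝ) : EReal) := iInf₂_le y hy
    have h2 : ((f x y : ℝ) : EReal) ≤ ((f x y + μ k / 2 * ‖y‖ ^ 2 : ℝ) : EReal) := by
      rw [EReal.coe_le_coe_iff]
      have : 0 ≤ μ k / 2 * ‖y‖ ^ 2 :=
        mul_nonneg (by linarith [hμ k]) (pow_nonneg (norm_nonneg y) 2)
      linarith
    exact le_trans (le_trans h1 h2) (le_add_of_nonneg_right (hPB0 k _))
  · rw [hPBtop k _ (not_le.mp hy).le, EReal.add_top_of_ne_bot (EReal.coe_ne_bot _)]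
    exact le_top

/-- The lower value is attained at a point of the lower argmin. -/
lemma lowerValue_eq_argmin {m n : ℕ} {f h : Evec m → Evec n → ℝ} {x : Evec m}
    {yhat : Evec n} (hyhat : yhat ∈ lowerArgmin f h x) :
    lowerValue f h x = ((f x yhat : ℝ) : EReal) :=
  le_antisymm (iInf₂_le yhat hyhat.1) (le_iInf₂ fun y hy => EReal.coe_le_coe_iff.mpr (hyhat.2 y hy))


/-- Pointwise limsup upper bound: `limsup_k φ_k(x) ≤ φ(x)`. -/
lemma phik_limsup_le {m n : ℕ} (F f H h : Evec m → Evec n → ℝ)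
    (PB PH Ph Pf : ℕ → ℝ → EReal) (μ θ : ℕ → ℝ)
    (hμpos : ∀ k, 0 < μ k)
    (hθ0 : Tendsto θ atTop (𝓝 0))
    (hPB : BarrierFamily PB) (hPH : AuxFamily PH) (hPh : AuxFamily Ph)
    (hPf : AuxFamily Pf) (x : Evec m) :
    limsup (fun k => phik F f H h PB PH Ph Pf μ θ k x) atTop
      ≤ upperValue F f H h x := by
  refine le_iInf₂ fun y hy => ?_
  obtain ⟨hyH, hyh, hyf⟩ := hy
  refine ereal_le_coe_of_forall fun ε hε => ?_
  have hε4 : (0 : ℝ) < ε / 4 := by linarith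
  have aux_ev : ∀ (P : ℕ → ℝ → EReal), AuxFamily P → ∀ ω : ℝ, ω ≤ 0 →
      ∀ᶠ k in atTop, P k ω ≤ ((ε/4 : ℝ) : EReal) := by
    intro P hP ω hω
    have h0 : (0 : EReal) < ((ε/4 : ℝ) : EReal) := by exact_mod_cast hε4
    exact ((hP.2.2.2.1 ω hω).eventually_lt_const h0).mono fun k hk => hk.le
  have e1 : ∀ᶠ k in atTop, θ k / 2 * ‖y‖ ^ 2 ≤ ε/4 := by
    have h1 : Tendsto (fun k => θ k / 2 * ‖y‖ ^ 2) atTop (𝓝 (0 / 2 * ‖y‖ ^ 2)) :=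
      (hθ0.div_const 2).mul_const _
    rw [show (0:ℝ) / 2 * ‖y‖ ^ 2 = 0 by ring] at h1
    exact (h1.eventually_lt_const hε4).mono fun k hk => hk.le
  have e2 := aux_ev PH hPH (H x y) hyH
  have e3 := aux_ev Ph hPh (h x y) hyh
  have e4 : ∀ᶠ k in atTop,
      erealExt (Pf k) (((f x y : ℝ) : EReal) - fkstar f h PB μ k x)
        ≤ ((ε/4 : ℝ) : EReal) := by
    refine (aux_ev Pf hPf 0 le_rfl).mono fun k hk => le_trans ?_ hk
    refine erealExt_le (hPf.2.1 k) ?_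
    have hle : ((f x y : ℝ) : EReal) ≤ fkstar f h PB μ k x :=
      le_trans hyf (fkstar_ge_lowerValue hPB.1 hPB.2.2.1 hμpos k x)
    have := coe_sub_nonpos hle
    rwa [show ((0:ℝ) : EReal) = (0 : EReal) by norm_cast]
  refine limsup_le_of_le (by isBoundedDefault) ?_
  filter_upwards [e1, e2, e3, e4] with k h1 h2 h3 h4
  have hle : phik F f H h PB PH Ph Pf μ θ k x ≤
      ((F x y + θ k / 2 * ‖y‖ ^ 2 : ℝ) : EReal) + PH k (H x y) + Ph k (h x y)
        + erealExt (Pf k) (((f x y : ℝ) : EReal) - fkstar f h PB μ k x) := by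
    unfold phik
    exact iInf_le _ y
  refine le_trans hle ?_
  have hA : ((F x y + θ k / 2 * ‖y‖ ^ 2 : ℝ) : EReal) ≤ ((F x y + ε/4 : ℝ) : EReal) :=
    EReal.coe_le_coe_iff.mpr (by linarith)
  calc ((F x y + θ k / 2 * ‖y‖ ^ 2 : ℝ) : EReal) + PH k (H x y) + Ph k (h x y)
        + erealExt (Pf k) (((f x y : ℝ) : EReal) - fkstar f h PB μ k x)
      ≤ ((F x y + ε/4 : ℝ) : EReal) + ((ε/4 : ℝ) : EReal) + ((ε/4 : ℝ) : EReal)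
        + ((ε/4 : ℝ) : EReal) := add_le_add (add_le_add (add_le_add hA h2) h3) h4
    _ = ((F x y + ε : ℝ) : EReal) := by
        rw [← EReal.coe_add, ← EReal.coe_add, ← EReal.coe_add]
        congr 1
        ring

/-- Eventual upper bound on `f_k*` along a convergent sequence. -/
lemma fkstar_upper {m n : ℕ} {f h : Evec m → Evec n → ℝ} {PB : ℕ → ℝ → EReal} {μ : ℕ → ℝ}
    (hfc : Continuous fun p : Evec m × Evec n => f p.1 p.2)
    (hhc : Continuous fun p : Evec m × Evec n => h p.1 p.2)
    (hA3 : ∀ x y, h x y = 0 → ∀ ε > (0:ℝ), ∃ y', ‖y' - y‖ < ε ∧ h x y' < 0)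
    (hμ0 : Tendsto μ atTop (𝓝 0))
    (hPB : BarrierFamily PB)
    {xt : Evec m} {xi : ℕ → Evec m} (hxi : Tendsto xi atTop (𝓝 xt))
    {k : ℕ → ℕ} (hk : StrictMono k)
    {yhat : Evec n} (hyhat : yhat ∈ lowerArgmin f h xt)
    {ε : ℝ} (hε : 0 < ε) :
    ∀ᶠ i in atTop, fkstar f h PB μ (k i) (xi i) ≤ ((f xt yhat + ε : ℝ) : EReal) := by
  have hε4 : (0 : ℝ) < ε / 4 := by linarith
  -- a strictly feasible point near the argmin
  obtain ⟨y0, hy0h, hy0f⟩ : ∃ y0, h xt y0 < 0 ∧ f xt y0 ≤ f xt yhat + ε / 4 := by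
    rcases lt_or_eq_of_le hyhat.1 with hlt | heq
    · exact ⟨yhat, hlt, by linarith⟩
    · have hcy : Continuous fun y : Evec n => f xt y :=
        hfc.comp (Continuous.prodMk_right xt)
      obtain ⟨δ, hδ, hδf⟩ := Metric.continuousAt_iff.mp hcy.continuousAt
        (ε := ε / 4) hε4
      obtain ⟨y', hy'1, hy'2⟩ := hA3 xt yhat heq δ hδ
      refine ⟨y', hy'2, ?_⟩
      have := hδf (by rwa [dist_eq_norm])
      rw [Real.dist_eq, abs_lt] at this
      linarith [this.1]
  set d : ℝ := h xt y0 with hd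
  -- eventual facts
  have a1 : ∀ᶠ i in atTop, f (xi i) y0 ≤ f xt y0 + ε / 4 := by
    have hgx : Continuous fun x : Evec m => f x y0 :=
      hfc.comp (continuous_id.prodMk continuous_const)
    have : Tendsto (fun i => f (xi i) y0) atTop (𝓝 (f xt y0)) :=
      (hgx.tendsto xt).comp hxi
    exact (this.eventually_lt_const (by linarith)).mono fun i hi => hi.le
  have a2 : ∀ᶠ i in atTop, h (xi i) y0 ≤ d / 2 := by
    have hgx : Continuous fun x : Evec m => h x y0 :=
      hhc.comp (continuous_id.prodMk continuous_const)
    have : Tendsto (fun i => h (xi i) y0) atTop (𝓝 d) := (hgx.tendsto xt).comp hxi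
    exact (this.eventually_lt_const (by linarith)).mono fun i hi => hi.le
  have a3 : ∀ᶠ i in atTop, μ (k i) / 2 * ‖y0‖ ^ 2 ≤ ε / 4 := by
    have h1 : Tendsto (fun i => μ (k i) / 2 * ‖y0‖ ^ 2) atTop (𝓝 (0 / 2 * ‖y0‖ ^ 2)) :=
      (((hμ0.comp hk.tendsto_atTop)).div_const 2).mul_const _
    rw [show (0:ℝ) / 2 * ‖y0‖ ^ 2 = 0 by ring] at h1
    exact (h1.eventually_lt_const hε4).mono fun i hi => hi.le
  have a4 : ∀ᶠ i in atTop, PB (k i) (d / 2) ≤ ((ε/4 : ℝ) : EReal) := by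
    have h1 : Tendsto (fun i => PB (k i) (d / 2)) atTop (𝓝 0) :=
      (hPB.2.2.2 (d / 2) (by linarith)).comp hk.tendsto_atTop
    have h0 : (0 : EReal) < ((ε/4 : ℝ) : EReal) := by exact_mod_cast hε4
    exact (h1.eventually_lt_const h0).mono fun i hi => hi.le
  filter_upwards [a1, a2, a3, a4] with i h1 h2 h3 h4
  have hle : fkstar f h PB μ (k i) (xi i) ≤
      ((f (xi i) y0 + μ (k i) / 2 * ‖y0‖ ^ 2 : ℝ) : EReal) + PB (k i) (h (xi i) y0) := by
    unfold fkstar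
    exact iInf_le _ y0
  refine le_trans hle ?_
  calc ((f (xi i) y0 + μ (k i) / 2 * ‖y0‖ ^ 2 : ℝ) : EReal) + PB (k i) (h (xi i) y0)
      ≤ ((f xt yhat + ε/4 + ε/4 + ε/4 : ℝ) : EReal) + ((ε/4 : ℝ) : EReal) :=
        add_le_add (EReal.coe_le_coe_iff.mpr (by linarith))
          (le_trans (hPB.2.1 (k i) h2) h4)
    _ = ((f xt yhat + ε : ℝ) : EReal) := by
        rw [← EReal.coe_add]
        congr 1
        ring

/-- The key lower bound: `φ(x̃) ≤ liminf_j φ_{ℓ_j}(x_j)`. -/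
lemma lower_main {m n : ℕ} (F f H h : Evec m → Evec n → ℝ) (X : Set (Evec m))
    (PB PH Ph Pf : ℕ → ℝ → EReal) (μ θ : ℕ → ℝ)
    (hFc : Continuous fun p : Evec m × Evec n => F p.1 p.2)
    (hfc : Continuous fun p : Evec m × Evec n => f p.1 p.2)
    (hHc : Continuous fun p : Evec m × Evec n => H p.1 p.2)
    (hhc : Continuous fun p : Evec m × Evec n => h p.1 p.2)
    (hfbd : ∃ cf : ℝ, ∀ x y, cf ≤ f x y)
    (hA1 : ∀ x ∈ X, (lowerArgmin f h x).Nonempty)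
    (hA2 : LevelBoundedUnif F X)
    (hA3 : ∀ x y, h x y = 0 → ∀ ε > (0 : ℝ), ∃ y', ‖y' - y‖ < ε ∧ h x y' < 0)
    (hμpos : ∀ k, 0 < μ k) (hθpos : ∀ k, 0 < θ k)
    (hμ0 : Tendsto μ atTop (𝓝 0))
    (hPB : BarrierFamily PB) (hPH : AuxFamily PH)
    (hPh : AuxFamily Ph) (hPf : AuxFamily Pf)
    (ℓ : ℕ → ℕ) (hℓ : StrictMono ℓ) (xs : ℕ → Evec m)
    (hxsX : ∀ j, xs j ∈ X)
    (xt : Evec m) (hxtX : xt ∈ X) (hxt : Tendsto xs atTop (𝓝 xt)) :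
    upperValue F f H h xt
      ≤ liminf (fun j => phik F f H h PB PH Ph Pf μ θ (ℓ j) (xs j)) atTop := by
  obtain ⟨cf, hcf⟩ := hfbd
  by_contra hcon
  push_neg at hcon
  obtain ⟨c, hc1, hc2⟩ := EReal.exists_between_coe_real hcon
  have hfreq : ∃ᶠ j in atTop,
      phik F f H h PB PH Ph Pf μ θ (ℓ j) (xs j) < (c : EReal) :=
    frequently_lt_of_liminf_lt (by isBoundedDefault) hc1
  obtain ⟨σ, hσ, hσlt⟩ := Filter.extraction_of_frequently_atTop hfreq
  have hkmono : StrictMono (fun i => ℓ (σ i)) := hℓ.comp hσ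
  have hxi : Tendsto (fun i => xs (σ i)) atTop (𝓝 xt) := hxt.comp hσ.tendsto_atTop
  -- choose near-optimal points y i
  have hy : ∀ i, ∃ y : Evec n,
      ((F (xs (σ i)) y + θ (ℓ (σ i)) / 2 * ‖y‖ ^ 2 : ℝ) : EReal)
        + PH (ℓ (σ i)) (H (xs (σ i)) y) + Ph (ℓ (σ i)) (h (xs (σ i)) y)
        + erealExt (Pf (ℓ (σ i)))
            (((f (xs (σ i)) y : ℝ) : EReal) - fkstar f h PB μ (ℓ (σ i)) (xs (σ i)))
        < (c : EReal) := by
    intro i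
    have h1 : phik F f H h PB PH Ph Pf μ θ (ℓ (σ i)) (xs (σ i)) < (c : EReal) := hσlt i
    unfold phik at h1
    exact iInf_lt_iff.mp h1
  choose ys hys using hy
  -- nonnegativity of the three penalty terms
  have hnn : ∀ i,
      0 ≤ PH (ℓ (σ i)) (H (xs (σ i)) (ys i)) ∧
      0 ≤ Ph (ℓ (σ i)) (h (xs (σ i)) (ys i)) ∧
      0 ≤ erealExt (Pf (ℓ (σ i)))
          (((f (xs (σ i)) (ys i) : ℝ) : EReal) - fkstar f h PB μ (ℓ (σ i)) (xs (σ i))) :=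
    fun i => ⟨hPH.1 _ _, hPh.1 _ _, erealExt_nonneg (hPf.1 _) _⟩
  -- the A-part is below c
  have hAlt : ∀ i,
      ((F (xs (σ i)) (ys i) + θ (ℓ (σ i)) / 2 * ‖ys i‖ ^ 2 : ℝ) : EReal) < (c : EReal) := by
    intro i
    refine lt_of_le_of_lt ?_ (hys i)
    refine le_trans (le_add_of_nonneg_right (hnn i).1) ?_
    refine le_trans (add_le_add_right (le_refl _) _) ?_
    refine le_trans (le_add_of_nonneg_right (hnn i).2.1) ?_
    exact le_add_of_nonneg_right (hnn i).2.2
  have hFle : ∀ i, F (xs (σ i)) (ys i) ≤ c := by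
    intro i
    have h2 := EReal.coe_lt_coe_iff.mp (hAlt i)
    have h3 : 0 ≤ θ (ℓ (σ i)) / 2 * ‖ys i‖ ^ 2 :=
      mul_nonneg (by linarith [hθpos (ℓ (σ i))]) (pow_nonneg (norm_nonneg _) 2)
    linarith
  -- boundedness of the y's
  obtain ⟨δ, hδ, B, hB, hBsub⟩ := hA2 xt hxtX c
  have hev : ∀ᶠ i in atTop, ys i ∈ B := by
    have hdist : Tendsto (fun i => dist (xs (σ i)) xt) atTop (𝓝 0) :=
      tendsto_iff_dist_tendsto_zero.mp hxi
    filter_upwards [hdist.eventually_lt_const hδ] with i hi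
    refine hBsub (xs (σ i)) (hxsX (σ i)) ?_ (hFle i)
    rw [← dist_eq_norm]
    exact hi.le
  obtain ⟨yt, _, σ2, hσ2, hy2⟩ := tendsto_subseq_of_frequently_bounded hB hev.frequently
  -- relabel everything along the second subsequence
  set K : ℕ → ℕ := fun i => ℓ (σ (σ2 i)) with hK
  have hKmono : StrictMono K := hkmono.comp hσ2
  have hx' : Tendsto (fun i => xs (σ (σ2 i))) atTop (𝓝 xt) := hxi.comp hσ2.tendsto_atTop
  have hy' : Tendsto (fun i => ys (σ2 i)) atTop (𝓝 yt) := hy2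
  have hFt : Tendsto (fun i => F (xs (σ (σ2 i))) (ys (σ2 i))) atTop (𝓝 (F xt yt)) :=
    (hFc.tendsto (xt, yt)).comp (hx'.prodMk_nhds hy')
  have hHt : Tendsto (fun i => H (xs (σ (σ2 i))) (ys (σ2 i))) atTop (𝓝 (H xt yt)) :=
    (hHc.tendsto (xt, yt)).comp (hx'.prodMk_nhds hy')
  have hht : Tendsto (fun i => h (xs (σ (σ2 i))) (ys (σ2 i))) atTop (𝓝 (h xt yt)) :=
    (hhc.tendsto (xt, yt)).comp (hx'.prodMk_nhds hy')
  have hft : Tendsto (fun i => f (xs (σ (σ2 i))) (ys (σ2 i))) atTop (𝓝 (f xt yt)) :=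
    (hfc.tendsto (xt, yt)).comp (hx'.prodMk_nhds hy')
  set M : ℝ := |F xt yt| + 1 with hM
  have hAev : ∀ᶠ i in atTop,
      ((-M : ℝ) : EReal)
        ≤ ((F (xs (σ (σ2 i))) (ys (σ2 i)) + θ (K i) / 2 * ‖ys (σ2 i)‖ ^ 2 : ℝ) : EReal) := by
    have h1 : -M < F xt yt := by
      have := neg_abs_le (F xt yt)
      rw [hM]; linarith
    filter_upwards [hFt.eventually_const_lt h1] with i hi
    rw [EReal.coe_le_coe_iff]
    have h3 : 0 ≤ θ (K i) / 2 * ‖ys (σ2 i)‖ ^ 2 :=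
      mul_nonneg (by linarith [hθpos (K i)]) (pow_nonneg (norm_nonneg _) 2)
    linarith
  -- abbreviations for the four summands
  have hsum : ∀ i,
      ((F (xs (σ (σ2 i))) (ys (σ2 i)) + θ (K i) / 2 * ‖ys (σ2 i)‖ ^ 2 : ℝ) : EReal)
        + PH (K i) (H (xs (σ (σ2 i))) (ys (σ2 i)))
        + Ph (K i) (h (xs (σ (σ2 i))) (ys (σ2 i)))
        + erealExt (Pf (K i))
            (((f (xs (σ (σ2 i))) (ys (σ2 i)) : ℝ) : EReal)
              - fkstar f h PB μ (K i) (xs (σ (σ2 i))))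
        ≤ (c : EReal) := fun i => (hys (σ2 i)).le
  have hPHbd : ∀ᶠ i in atTop,
      PH (K i) (H (xs (σ (σ2 i))) (ys (σ2 i))) ≤ ((c + M : ℝ) : EReal) := by
    filter_upwards [hAev] with i hA
    refine piece_bound hA (le_trans ?_ (hsum i))
    refine le_trans (le_add_of_nonneg_right (hnn (σ2 i)).2.1) ?_
    exact le_add_of_nonneg_right (hnn (σ2 i)).2.2
  have hPhbd : ∀ᶠ i in atTop,
      Ph (K i) (h (xs (σ (σ2 i))) (ys (σ2 i))) ≤ ((c + M : ℝ) : EReal) := by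
    filter_upwards [hAev] with i hA
    refine piece_bound hA (le_trans ?_ (hsum i))
    refine le_trans (add_le_add_left (le_add_of_nonneg_right (hnn (σ2 i)).1) _) ?_
    exact le_add_of_nonneg_right (hnn (σ2 i)).2.2
  have hExtbd : ∀ᶠ i in atTop,
      erealExt (Pf (K i))
          (((f (xs (σ (σ2 i))) (ys (σ2 i)) : ℝ) : EReal)
            - fkstar f h PB μ (K i) (xs (σ (σ2 i)))) ≤ ((c + M : ℝ) : EReal) := by
    filter_upwards [hAev] with i hA
    refine piece_bound hA (le_trans ?_ (hsum i))
    refine add_le_add_left ?_ _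
    refine le_trans (le_add_of_nonneg_right (hnn (σ2 i)).1) ?_
    exact le_add_of_nonneg_right (hnn (σ2 i)).2.1
  -- constraints hold in the limit
  have hH0 : H xt yt ≤ 0 := by
    have h1 := aux_sub hPH hKmono (fun i => H (xs (σ (σ2 i))) (ys (σ2 i))) (c + M) hPHbd
    have h2 : limsup (fun i => ((H (xs (σ (σ2 i))) (ys (σ2 i)) : ℝ) : EReal)) atTop
        = ((H xt yt : ℝ) : EReal) := (EReal.tendsto_coe.mpr hHt).limsup_eq
    rw [h2] at h1
    exact EReal.coe_nonpos.mp h1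
  have hh0 : h xt yt ≤ 0 := by
    have h1 := aux_sub hPh hKmono (fun i => h (xs (σ (σ2 i))) (ys (σ2 i))) (c + M) hPhbd
    have h2 : limsup (fun i => ((h (xs (σ (σ2 i))) (ys (σ2 i)) : ℝ) : EReal)) atTop
        = ((h xt yt : ℝ) : EReal) := (EReal.tendsto_coe.mpr hht).limsup_eq
    rw [h2] at h1
    exact EReal.coe_nonpos.mp h1
  -- the value constraint holds in the limit
  obtain ⟨yhat, hyhat⟩ := hA1 xt hxtX
  have hloweq : lowerValue f h xt = ((f xt yhat : ℝ) : EReal) := lowerValue_eq_argmin hyhat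
  have hub1 : ∀ᶠ i in atTop,
      fkstar f h PB μ (K i) (xs (σ (σ2 i))) ≤ ((f xt yhat + 1 : ℝ) : EReal) :=
    fkstar_upper hfc hhc hA3 hμ0 hPB hx' hKmono hyhat one_pos
  have hlb : ∀ i, (cf : EReal) ≤ fkstar f h PB μ (K i) (xs (σ (σ2 i))) :=
    fun i => fkstar_ge_cf hcf hPB.1 hμpos _ _
  have hreq : ∀ᶠ i in atTop,
      (((fkstar f h PB μ (K i) (xs (σ (σ2 i)))).toReal : ℝ) : EReal)
        = fkstar f h PB μ (K i) (xs (σ (σ2 i))) := by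
    filter_upwards [hub1] with i hi
    refine EReal.coe_toReal ?_ ?_
    · exact (lt_of_le_of_lt hi (EReal.coe_lt_top _)).ne
    · exact (lt_of_lt_of_le (EReal.bot_lt_coe cf) (hlb i)).ne'
  set ω : ℕ → ℝ := fun i =>
    f (xs (σ (σ2 i))) (ys (σ2 i)) - (fkstar f h PB μ (K i) (xs (σ (σ2 i)))).toReal with hω
  have hPfbd : ∀ᶠ i in atTop, Pf (K i) (ω i) ≤ ((c + M : ℝ) : EReal) := by
    filter_upwards [hExtbd, hreq] with i h1 h2
    refine le_trans (erealExt_lower (Pf (K i)) ?_) h1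
    rw [hω]
    rw [EReal.coe_sub, h2]
  have hω0 : limsup (fun i => ((ω i : ℝ) : EReal)) atTop ≤ 0 :=
    aux_sub hPf hKmono ω (c + M) hPfbd
  have hfle : ∀ ε : ℝ, 0 < ε → f xt yt ≤ f xt yhat + ε := by
    intro ε hε
    have hub : ∀ᶠ i in atTop,
        fkstar f h PB μ (K i) (xs (σ (σ2 i))) ≤ ((f xt yhat + ε : ℝ) : EReal) :=
      fkstar_upper hfc hhc hA3 hμ0 hPB hx' hKmono hyhat hε
    have hrle : ∀ᶠ i in atTop,
        (fkstar f h PB μ (K i) (xs (σ (σ2 i)))).toReal ≤ f xt yhat + ε := by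
      filter_upwards [hub, hreq] with i h1 h2
      rw [← EReal.coe_le_coe_iff, h2]
      exact h1
    have hcomp : ∀ᶠ i in atTop,
        ((f (xs (σ (σ2 i))) (ys (σ2 i)) - (f xt yhat + ε) : ℝ) : EReal)
          ≤ ((ω i : ℝ) : EReal) := by
      filter_upwards [hrle] with i h1
      rw [EReal.coe_le_coe_iff, hω]
      simp only
      linarith
    have hlims := le_trans (limsup_le_limsup hcomp) hω0
    have hteq : limsup
        (fun i => ((f (xs (σ (σ2 i))) (ys (σ2 i)) - (f xt yhat + ε) : ℝ) : EReal)) atTop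
        = ((f xt yt - (f xt yhat + ε) : ℝ) : EReal) :=
      (EReal.tendsto_coe.mpr (hft.sub_const _)).limsup_eq
    rw [hteq] at hlims
    have := EReal.coe_nonpos.mp hlims
    linarith
  have hfin : f xt yt ≤ f xt yhat := by
    by_contra hcc
    push_neg at hcc
    have := hfle ((f xt yt - f xt yhat) / 2) (by linarith)
    linarith
  -- yt is feasible for the upper-level problem at xt
  have hfeas : yt ∈ {y : Evec n |
      H xt y ≤ 0 ∧ h xt y ≤ 0 ∧ ((f xt y : ℝ) : EReal) ≤ lowerValue f h xt} := by
    refine ⟨hH0, hh0, ?_⟩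
    rw [hloweq]
    exact EReal.coe_le_coe_iff.mpr hfin
  have hup : upperValue F f H h xt ≤ ((F xt yt : ℝ) : EReal) := by
    unfold upperValue
    exact iInf₂_le yt hfeas
  have hFyt : F xt yt ≤ c :=
    le_of_tendsto hFt (Eventually.of_forall fun i => hFle (σ2 i))
  have : upperValue F f H h xt < upperValue F f H h xt :=
    lt_of_le_of_lt (le_trans hup (EReal.coe_le_coe_iff.mpr hFyt)) hc2
  exact absurd this (lt_irrefl _)

end BVFSM


theorem BVFSM_minimizer_convergence
    {m n : ℕ} (F f H h : Evec m → Evec n → ℝ) (X : Set (Evec m))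
    (PB PH Ph Pf : ℕ → ℝ → EReal) (μ θ : ℕ → ℝ)
    (hX : IsCompact X)
    (hFc : Continuous fun p : Evec m × Evec n => F p.1 p.2)
    (hfc : Continuous fun p : Evec m × Evec n => f p.1 p.2)
    (hHc : Continuous fun p : Evec m × Evec n => H p.1 p.2)
    (hhc : Continuous fun p : Evec m × Evec n => h p.1 p.2)
    (hfbd : ∃ cf : ℝ, ∀ x y, cf ≤ f x y)
    (hA1 : ∀ x ∈ X, (lowerArgmin f h x).Nonempty)
    (hA2 : LevelBoundedUnif F X)
    (hA3 : ∀ x y, h x y = 0 → ∀ ε > (0 : ℝ), ∃ y', ‖y' - y‖ < ε ∧ h x y' < 0)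
    (hμpos : ∀ k, 0 < μ k) (hθpos : ∀ k, 0 < θ k)
    (hμ0 : Tendsto μ atTop (𝓝 0)) (hθ0 : Tendsto θ atTop (𝓝 0))
    (hPB : BarrierFamily PB) (hPH : AuxFamily PH)
    (hPh : AuxFamily Ph) (hPf : AuxFamily Pf)
    (ℓ : ℕ → ℕ) (hℓ : StrictMono ℓ) (xs : ℕ → Evec m)
    (hmin : ∀ j, xs j ∈ X ∧ ∀ x ∈ X, phik F f H h PB PH Ph Pf μ θ (ℓ j) (xs j) ≤ phik F f H h PB PH Ph Pf μ θ (ℓ j) x)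
    (xt : Evec m) (hxt : Tendsto xs atTop (𝓝 xt))
    :
    (xt ∈ X ∧ ∀ x ∈ X, upperValue F f H h xt ≤ upperValue F f H h x) ∧
      Tendsto (fun j => ⨅ x ∈ X, phik F f H h PB PH Ph Pf μ θ (ℓ j) x) atTop (𝓝 (⨅ x ∈ X, upperValue F f H h x)) := by
  have hxsX : ∀ j, xs j ∈ X := fun j => (hmin j).1
  have hxtX : xt ∈ X := hX.isClosed.mem_of_tendsto hxt (Eventually.of_forall hxsX)
  have hlower := BVFSM.lower_main F f H h X PB PH Ph Pf μ θ hFc hfc hHc hhc hfbd hA1 hA2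
    hA3 hμpos hθpos hμ0 hPB hPH hPh hPf ℓ hℓ xs hxsX xt hxtX hxt
  have hupper : ∀ x ∈ X,
      limsup (fun j => phik F f H h PB PH Ph Pf μ θ (ℓ j) (xs j)) atTop
        ≤ upperValue F f H h x := by
    intro x hx
    have h1 : limsup (fun j => phik F f H h PB PH Ph Pf μ θ (ℓ j) (xs j)) atTop
        ≤ limsup (fun j => phik F f H h PB PH Ph Pf μ θ (ℓ j) x) atTop :=
      limsup_le_limsup (Eventually.of_forall fun j => (hmin j).2 x hx)
    have h2 : limsup (fun j => phik F f H h PB PH Ph Pf μ θ (ℓ j) x) atTop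
        ≤ limsup (fun k => phik F f H h PB PH Ph Pf μ θ k x) atTop :=
      BVFSM.limsup_subseq_le (u := fun k => phik F f H h PB PH Ph Pf μ θ k x) hℓ
    exact le_trans (le_trans h1 h2)
      (BVFSM.phik_limsup_le F f H h PB PH Ph Pf μ θ hμpos hθ0 hPB hPH hPh hPf x)
  constructor
  · refine ⟨hxtX, fun x hx => ?_⟩
    exact le_trans hlower (le_trans liminf_le_limsup (hupper x hx))
  · have heq : (fun j => ⨅ x ∈ X, phik F f H h PB PH Ph Pf μ θ (ℓ j) x)
        = fun j => phik F f H h PB PH Ph Pf μ θ (ℓ j) (xs j) := by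
      funext j
      exact le_antisymm (iInf₂_le (xs j) (hxsX j)) (le_iInf₂ fun x hx => (hmin j).2 x hx)
    rw [heq]
    refine tendsto_of_le_liminf_of_limsup_le ?_ ?_
    · exact le_trans (iInf₂_le xt hxtX) hlower
    · exact le_iInf₂ fun x hx => hupper x hx
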